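/- Let n ≥ 1, let Ω ⊆ ℝⁿ be open, and let f : Ω → ℝ be a smooth function satisfying the graphical self-shrinker equation ∑_{i,j=1}^n g^{ij}(x) ∂²_{ij} f(x) = (1/2)(x·∇f(x) − f(x)) on Ω, where g^{ij}(x) = δ_{ij} − ∂_i f(x) ∂_j f(x)/(1+|∇f(x)|²). Set w(x) = (1 + |∇f(x)|²)^{−1/2}. Then for all x ∈ Ω, ∑_{i,j=1}^n g^{ij}(x) ∂²_{ij} w(x) − (1/2) x·∇w(x) = −|A(x)|² w(x), where |A(x)|² = (1+|∇f(x)|²)^{−1} ∑_{i,j,k,l=1}^n g^{ik}(x) g^{jl}(x) ∂²_{ij} f(x) ∂²_{kl} f(x) is the squared norm of the second fundamental form of the graph; in particular the left-hand side is ≤ 0. -/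

import Mathlib

/-- The `i`-th partial derivative of `f : ℝⁿ → ℝ` at `x`. -/
noncomputable def pd {n : ℕ} (f : EuclideanSpace ℝ (Fin n) → ℝ) (i : Fin n)
    (x : EuclideanSpace ℝ (Fin n)) : ℝ :=
  fderiv ℝ f x (EuclideanSpace.single i 1)

/-- The second partial derivative `∂²_{ij} f` at `x`. -/
noncomputable def pd2 {n : ℕ} (f : EuclideanSpace ℝ (Fin n) → ℝ) (i j : Fin n)
    (x : EuclideanSpace ℝ (Fin n)) : ℝ :=
  pd (fun y => pd f j y) i x

/-- The inverse induced metric `g^{ij} = δ_{ij} − ∂_i f ∂_j f / (1 + |∇f|²)` of the graph of `f`. -/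
noncomputable def gInv {n : ℕ} (f : EuclideanSpace ℝ (Fin n) → ℝ) (i j : Fin n)
    (x : EuclideanSpace ℝ (Fin n)) : ℝ :=
  (if i = j then 1 else 0) - pd f i x * pd f j x / (1 + ∑ k, (pd f k x) ^ 2)

/-- The squared norm `|A|² = g^{ik} g^{jl} h_{ij} h_{kl}` of the second fundamental form
`h_{ij} = ∂²_{ij} f / √(1+|∇f|²)` of the graph of `f`. -/
noncomputable def sffNormSq {n : ℕ} (f : EuclideanSpace ℝ (Fin n) → ℝ)
    (x : EuclideanSpace ℝ (Fin n)) : ℝ :=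
  (1 + ∑ i, (pd f i x) ^ 2)⁻¹ *
    ∑ i, ∑ j, ∑ k, ∑ l, gInv f i k x * gInv f j l x * pd2 f i j x * pd2 f k l x

open scoped ContDiff
section rules
variable {n : ℕ} {x : EuclideanSpace ℝ (Fin n)} {a b : EuclideanSpace ℝ (Fin n) → ℝ} {i j : Fin n}

lemma pd_congr (h : a =ᶠ[nhds x] b) (i : Fin n) : pd a i x = pd b i x := by
  unfold pd; rw [h.fderiv_eq]

lemma pd_const (c : ℝ) : pd (fun _ => c) i x = 0 := by simp [pd]

lemma pd_add (ha : DifferentiableAt ℝ a x) (hb : DifferentiableAt ℝ b x) :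
    pd (fun y => a y + b y) i x = pd a i x + pd b i x := by
  simp [pd, fderiv_fun_add ha hb]

lemma pd_sub (ha : DifferentiableAt ℝ a x) (hb : DifferentiableAt ℝ b x) :
    pd (fun y => a y - b y) i x = pd a i x - pd b i x := by
  simp [pd, fderiv_fun_sub ha hb]

lemma pd_neg : pd (fun y => -(a y)) i x = -(pd a i x) := by
  simp [pd, fderiv_neg]

lemma pd_mul (ha : DifferentiableAt ℝ a x) (hb : DifferentiableAt ℝ b x) :
    pd (fun y => a y * b y) i x = pd a i x * b x + a x * pd b i x := by
  simp [pd, fderiv_fun_mul ha hb]; ring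

lemma pd_const_mul (ha : DifferentiableAt ℝ a x) (c : ℝ) :
    pd (fun y => c * a y) i x = c * pd a i x := by
  simp [pd, fderiv_const_mul ha]

lemma pd_sum {ι : Type*} (s : Finset ι) (F : ι → EuclideanSpace ℝ (Fin n) → ℝ)
    (h : ∀ k ∈ s, DifferentiableAt ℝ (F k) x) :
    pd (fun y => ∑ k ∈ s, F k y) i x = ∑ k ∈ s, pd (F k) i x := by
  simp [pd, fderiv_fun_sum h]

lemma pd_sq (ha : DifferentiableAt ℝ a x) :
    pd (fun y => (a y) ^ 2) i x = 2 * a x * pd a i x := by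
  have : (fun y => (a y) ^ 2) = fun y => a y * a y := by ext y; ring
  rw [this, pd_mul ha ha]; ring

lemma pd_inv (ha : DifferentiableAt ℝ a x) (h0 : a x ≠ 0) :
    pd (fun y => (a y)⁻¹) i x = -pd a i x / (a x) ^ 2 := by
  have h := ((hasDerivAt_inv h0).comp_hasFDerivAt x ha.hasFDerivAt)
  have h2 : (fun y => (a y)⁻¹) = (fun y : ℝ => y⁻¹) ∘ a := rfl
  rw [pd, h2, h.fderiv]
  simp [pd]; ring

lemma pd_sqrt (ha : DifferentiableAt ℝ a x) (h0 : a x ≠ 0) :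
    pd (fun y => Real.sqrt (a y)) i x = pd a i x / (2 * Real.sqrt (a x)) := by
  have h := ((Real.hasDerivAt_sqrt h0).comp_hasFDerivAt x ha.hasFDerivAt)
  have h2 : (fun y => Real.sqrt (a y)) = Real.sqrt ∘ a := rfl
  rw [pd, h2, h.fderiv]
  simp [pd]; ring

lemma pd_div (ha : DifferentiableAt ℝ a x) (hb : DifferentiableAt ℝ b x) (h0 : b x ≠ 0) :
    pd (fun y => a y / b y) i x = (pd a i x * b x - a x * pd b i x) / (b x) ^ 2 := by
  have : (fun y => a y / b y) = fun y => a y * (b y)⁻¹ := by ext y; rw [div_eq_mul_inv]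
  rw [this, pd_mul ha (hb.fun_inv h0), pd_inv hb h0]
  field_simp; ring

lemma pd_coord : pd (fun y => y j) i x = if j = i then 1 else 0 := by
  have h : (fun y : EuclideanSpace ℝ (Fin n) => y j)
      = (EuclideanSpace.proj j : EuclideanSpace ℝ (Fin n) →L[ℝ] ℝ) := rfl
  rw [pd, h, ContinuousLinearMap.fderiv]
  simp [EuclideanSpace.single_apply]

lemma contDiffAt_pd (h : ContDiffAt ℝ ∞ a x) (i : Fin n) : ContDiffAt ℝ ∞ (pd a i) x := by
  have h1 : ContDiffAt ℝ ∞ (fderiv ℝ a) x := h.fderiv_right (by simp)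
  exact h1.clm_apply contDiffAt_const

lemma diffAt_of_smooth' {E F : Type*} [NormedAddCommGroup E] [NormedSpace ℝ E]
    [NormedAddCommGroup F] [NormedSpace ℝ F] {g : E → F} {y : E}
    (h : ContDiffAt ℝ ∞ g y) : DifferentiableAt ℝ g y :=
  h.differentiableAt (by simp)

lemma diffAt_of_smooth (h : ContDiffAt ℝ ∞ a x) : DifferentiableAt ℝ a x :=
  diffAt_of_smooth' h

lemma pd2_comm (h : ContDiffAt ℝ ∞ a x) (i j : Fin n) : pd2 a i j x = pd2 a j i x := by
  have hd : DifferentiableAt ℝ (fderiv ℝ a) x :=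
    diffAt_of_smooth' (h.fderiv_right (by simp))
  have key : ∀ k l : Fin n, pd2 a k l x
      = fderiv ℝ (fderiv ℝ a) x (EuclideanSpace.single k 1) (EuclideanSpace.single l 1) := by
    intro k l
    show pd (fun y => fderiv ℝ a y (EuclideanSpace.single l 1)) k x = _
    rw [pd, fderiv_clm_apply hd (differentiableAt_const _)]
    simp
  rw [key, key]
  exact h.isSymmSndFDerivAt (by rw [minSmoothness_of_isRCLikeNormedField]; exact WithTop.coe_le_coe.2 le_top) _ _
end rules
open Finset

section helpers
variable {n : ℕ}

lemma sum2_factor (F G : Fin n → ℝ) :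
    ∑ i, ∑ j, F i * G j = (∑ i, F i) * (∑ j, G j) := by
  rw [Finset.sum_mul_sum]

lemma sum_swap3 (t : Fin n → Fin n → Fin n → ℝ) :
    ∑ i, ∑ j, ∑ k, t i j k = ∑ k, ∑ i, ∑ j, t i j k := by
  calc ∑ i, ∑ j, ∑ k, t i j k = ∑ i, ∑ k, ∑ j, t i j k :=
        Finset.sum_congr rfl fun i _ => Finset.sum_comm
    _ = ∑ k, ∑ i, ∑ j, t i j k := Finset.sum_comm

lemma key_pattern (F C : Fin n → ℝ) (A : Fin n → Fin n → ℝ) :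
    ∑ k, F k * ∑ i, C i * A k i = ∑ i, C i * ∑ k, F k * A k i := by
  have h : ∀ k, F k * ∑ i, C i * A k i = ∑ i, C i * (F k * A k i) := by
    intro k; rw [Finset.mul_sum]; exact Finset.sum_congr rfl fun i _ => by ring
  rw [Finset.sum_congr rfl fun k _ => h k, Finset.sum_comm]
  exact Finset.sum_congr rfl fun i _ => by rw [← Finset.mul_sum]

lemma sumG_expand (U : Fin n → ℝ) (v : ℝ) (A : Fin n → Fin n → ℝ) :
    ∑ i, ∑ j, ((if i = j then 1 else 0) - U i * U j / v) * A i j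
      = (∑ i, A i i) - (∑ i, ∑ j, U i * U j * A i j) / v := by
  have h : ∀ i, ∑ j, ((if i = j then 1 else 0) - U i * U j / v) * A i j
      = A i i - (∑ j, U i * U j * A i j) / v := by
    intro i
    have h2 : ∀ j, ((if i = j then 1 else 0) - U i * U j / v) * A i j
        = (if i = j then A i j else 0) - U i * U j * A i j / v := by
      intro j; by_cases hij : i = j <;> simp [hij] <;> ring
    rw [Finset.sum_congr rfl fun j _ => h2 j, Finset.sum_sub_distrib, Finset.sum_ite_eq,
      ← Finset.sum_div]
    simp
  rw [Finset.sum_congr rfl fun i _ => h i, Finset.sum_sub_distrib, Finset.sum_div]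
end helpers

set_option maxHeartbeats 2000000 in
lemma key_algebra (n : ℕ) (U b xc : Fin n → ℝ) (Hm : Fin n → Fin n → ℝ)
    (Tm : Fin n → Fin n → Fin n → ℝ) (v s : ℝ)
    (hv : v = 1 + ∑ i, U i ^ 2)
    (hs : 0 < s) (hs2 : s ^ 2 = v)
    (hb : ∀ j, b j = ∑ k, U k * Hm j k)
    (hH : ∀ i j, Hm i j = Hm j i)
    (hT1 : ∀ i j k, Tm i j k = Tm j i k)
    (hT2 : ∀ i j k, Tm i j k = Tm i k j)
    (hdeq : ∀ k, ∑ i, ∑ j,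
        (-(((Hm k i * U j + U i * Hm k j) * v - U i * U j * (2 * b k)) / v ^ 2) * Hm i j
          + ((if i = j then 1 else 0) - U i * U j / v) * Tm k i j)
      = 1 / 2 * ∑ i, xc i * Hm k i) :
    ((∑ i, ∑ j, ((if i = j then 1 else 0) - U i * U j / v) *
        (-(∑ k, (Hm i k * Hm j k + U k * Tm i j k)) / (v * s)
          + 3 * b i * b j / (v ^ 2 * s)))
      - 1 / 2 * ∑ i, xc i * (-b i / (v * s))
      = -((v⁻¹ * ∑ i, ∑ j, ∑ k, ∑ l,
            (((if i = k then 1 else 0) - U i * U k / v) *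
             ((if j = l then 1 else 0) - U j * U l / v) * Hm i j * Hm k l)) * s⁻¹))
    ∧ (0 ≤ ∑ i, ∑ j, ∑ k, ∑ l,
            (((if i = k then 1 else 0) - U i * U k / v) *
             ((if j = l then 1 else 0) - U j * U l / v) * Hm i j * Hm k l)) := by
  have hp0 : (0:ℝ) ≤ ∑ i, U i ^ 2 := Finset.sum_nonneg fun i _ => sq_nonneg _
  have hv1 : (1:ℝ) ≤ v := by rw [hv]; linarith
  have hv0 : v ≠ 0 := by linarith
  have hs0 : s ≠ 0 := ne_of_gt hs
  set p := ∑ i, U i ^ 2 with hpdef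
  set S := ∑ i, ∑ j, (Hm i j) ^ 2 with hSdef
  set B := ∑ i, (b i) ^ 2 with hBdef
  set c := ∑ i, U i * b i with hcdef
  set D := ∑ i, xc i * b i with hDdef
  -- contraction facts
  have f1 : ∀ j, ∑ i, U i * Hm i j = b j := by
    intro j; rw [hb]
    exact Finset.sum_congr rfl fun i _ => by rw [hH]
  have f1' : ∀ j, ∑ i, U i * Hm j i = b j := fun j => (hb j).symm
  -- ∑ G M1
  have hGM1 : ∑ i, ∑ j, ((if i = j then 1 else 0) - U i * U j / v) * (∑ k, Hm i k * Hm j k)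
      = S - B / v := by
    rw [sumG_expand]
    congr 1
    · rw [hSdef]
      exact Finset.sum_congr rfl fun i _ => Finset.sum_congr rfl fun k _ => (pow_two (Hm i k)).symm
    · congr 1
      have e1 : ∑ i, ∑ j, U i * U j * (∑ k, Hm i k * Hm j k)
          = ∑ i, ∑ j, ∑ k, (U i * Hm i k) * (U j * Hm j k) := by
        refine Finset.sum_congr rfl fun i _ => Finset.sum_congr rfl fun j _ => ?_
        rw [Finset.mul_sum]
        exact Finset.sum_congr rfl fun k _ => by ring
      rw [e1, sum_swap3, hBdef]
      refine Finset.sum_congr rfl fun k _ => ?_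
      rw [sum2_factor (fun i => U i * Hm i k) (fun j => U j * Hm j k), f1 k, pow_two]
  -- derivative of metric contracted with Hessian
  have hpdGH : ∀ k, ∑ i, ∑ j,
      (-(((Hm k i * U j + U i * Hm k j) * v - U i * U j * (2 * b k)) / v ^ 2) * Hm i j)
      = -((2 * v * (∑ i, Hm k i * b i) - 2 * b k * c) / v ^ 2) := by
    intro k
    have e1 : ∀ i j, (-(((Hm k i * U j + U i * Hm k j) * v - U i * U j * (2 * b k)) / v ^ 2) * Hm i j)
        = (-(v / v ^ 2)) * (Hm k i * (U j * Hm i j)) + (-(v / v ^ 2)) * (Hm k j * (U i * Hm i j))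
          + (2 * b k / v ^ 2) * (U i * (U j * Hm i j)) := by
      intro i j; ring
    rw [Finset.sum_congr rfl fun i _ => Finset.sum_congr rfl fun j _ => e1 i j]
    simp only [Finset.sum_add_distrib, ← Finset.mul_sum]
    have e2 : ∑ i, Hm k i * ∑ j, U j * Hm i j = ∑ i, Hm k i * b i :=
      Finset.sum_congr rfl fun i _ => by rw [f1' i]
    have e3 : ∑ i, ∑ j, Hm k j * (U i * Hm i j) = ∑ i, Hm k i * b i := by
      rw [Finset.sum_comm]
      refine Finset.sum_congr rfl fun j _ => ?_
      rw [← Finset.mul_sum, f1 j]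
    have e4 : ∑ i, U i * ∑ j, U j * Hm i j = c := by
      rw [hcdef]
      exact Finset.sum_congr rfl fun i _ => by rw [f1' i]
    rw [e3, e2, e4]
    field_simp
    ring
  -- split the differentiated equation
  have hsplit : ∀ k, ∑ i, ∑ j, ((if i = j then 1 else 0) - U i * U j / v) * Tm k i j
      = 1 / 2 * ∑ i, xc i * Hm k i + ((2 * v * (∑ i, Hm k i * b i) - 2 * b k * c) / v ^ 2) := by
    intro k
    have h := hdeq k
    simp only [Finset.sum_add_distrib] at h
    rw [hpdGH k] at h
    linarith
  -- ∑ G M2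
  have hGM2 : ∑ i, ∑ j, ((if i = j then 1 else 0) - U i * U j / v) * (∑ k, U k * Tm i j k)
      = 1 / 2 * D + 2 * B / v - 2 * c ^ 2 / v ^ 2 := by
    have e1 : ∑ i, ∑ j, ((if i = j then 1 else 0) - U i * U j / v) * (∑ k, U k * Tm i j k)
        = ∑ k, ∑ i, ∑ j, U k * (((if i = j then 1 else 0) - U i * U j / v) * Tm k i j) := by
      rw [← sum_swap3]
      refine Finset.sum_congr rfl fun i _ => Finset.sum_congr rfl fun j _ => ?_
      rw [Finset.mul_sum]
      refine Finset.sum_congr rfl fun k _ => ?_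
      rw [hT2 i j k, hT1 i k j]
      ring
    rw [e1]
    have e2 : ∀ k, ∑ i, ∑ j, U k * (((if i = j then 1 else 0) - U i * U j / v) * Tm k i j)
        = 1 / 2 * (U k * ∑ i, xc i * Hm k i) + (2 / v) * (U k * ∑ i, Hm k i * b i)
          - (2 * c / v ^ 2) * (U k * b k) := by
      intro k
      have : ∑ i, ∑ j, U k * (((if i = j then 1 else 0) - U i * U j / v) * Tm k i j)
          = U k * ∑ i, ∑ j, ((if i = j then 1 else 0) - U i * U j / v) * Tm k i j := by
        rw [Finset.mul_sum]
        exact Finset.sum_congr rfl fun i _ => by rw [Finset.mul_sum]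
      rw [this, hsplit k]
      field_simp
      ring
    rw [Finset.sum_congr rfl fun k _ => e2 k]
    simp only [Finset.sum_add_distrib, Finset.sum_sub_distrib, ← Finset.mul_sum]
    have e4 : ∑ k, U k * ∑ i, xc i * Hm k i = D := by
      rw [key_pattern U xc Hm, hDdef]
      exact Finset.sum_congr rfl fun i _ => by rw [f1 i]
    have e5 : ∑ k, U k * ∑ i, Hm k i * b i = B := by
      have h : ∀ k, ∑ i, Hm k i * b i = ∑ i, b i * Hm k i :=
        fun k => Finset.sum_congr rfl fun i _ => by ring
      rw [Finset.sum_congr rfl fun k _ => by rw [h k], key_pattern U b Hm, hBdef]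
      refine Finset.sum_congr rfl fun i _ => by rw [f1 i, pow_two]
    have e6 : ∑ k, U k * b k = c := hcdef.symm
    rw [e4, e5, e6]
    field_simp
  -- ∑ G bb
  have hGbb : ∑ i, ∑ j, ((if i = j then 1 else 0) - U i * U j / v) * (b i * b j)
      = B - c ^ 2 / v := by
    rw [sumG_expand]
    congr 1
    · rw [hBdef]
      exact Finset.sum_congr rfl fun i _ => (pow_two (b i)).symm
    · congr 1
      have e1 : ∑ i, ∑ j, U i * U j * (b i * b j) = ∑ i, ∑ j, (U i * b i) * (U j * b j) :=
        Finset.sum_congr rfl fun i _ => Finset.sum_congr rfl fun j _ => by ring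
      rw [e1, sum2_factor (fun i => U i * b i) (fun j => U j * b j), ← hcdef, pow_two]
  -- helper: pull an l-independent if out of a sum
  have pull_ite : ∀ (c' : Prop) (_ : Decidable c') (F : Fin n → ℝ),
      (∑ l, if c' then F l else 0) = if c' then ∑ l, F l else 0 := by
    intro c' _ F; by_cases h : c' <;> simp [h]
  -- the quadruple sum
  have hQ : (∑ i, ∑ j, ∑ k, ∑ l,
        (((if i = k then 1 else 0) - U i * U k / v) *
         ((if j = l then 1 else 0) - U j * U l / v) * Hm i j * Hm k l))
      = S - 2 * B / v + c ^ 2 / v ^ 2 := by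
    have hterm : ∀ i j k l : Fin n,
        (((if i = k then 1 else 0) - U i * U k / v) *
         ((if j = l then 1 else 0) - U j * U l / v) * Hm i j * Hm k l)
        = (if i = k then (if j = l then Hm i j * Hm k l else 0) else 0)
          - (if i = k then U j * U l * (Hm i j * Hm k l) else 0) / v
          - (if j = l then U i * U k * (Hm i j * Hm k l) else 0) / v
          + (U i * (U j * Hm i j)) * (U k * (U l * Hm k l)) / v ^ 2 := by
      intro i j k l
      by_cases h1 : i = k <;> by_cases h2 : j = l <;> simp [h1, h2] <;> ring
    rw [Finset.sum_congr rfl fun i _ => Finset.sum_congr rfl fun j _ =>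
      Finset.sum_congr rfl fun k _ => Finset.sum_congr rfl fun l _ => hterm i j k l]
    simp only [Finset.sum_add_distrib, Finset.sum_sub_distrib, ← Finset.sum_div]
    have hQ1 : ∑ i : Fin n, ∑ j : Fin n, ∑ k : Fin n, ∑ l : Fin n,
        (if i = k then (if j = l then Hm i j * Hm k l else 0) else 0) = S := by
      have h1 : ∀ i j k : Fin n, (∑ l, if i = k then (if j = l then Hm i j * Hm k l else 0) else 0)
          = if i = k then Hm i j * Hm k j else 0 := by
        intro i j k
        rw [pull_ite _ inferInstance]
        by_cases h : i = k <;> simp [h, Finset.sum_ite_eq]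
      rw [Finset.sum_congr rfl fun i _ => Finset.sum_congr rfl fun j _ =>
        Finset.sum_congr rfl fun k _ => h1 i j k]
      have h2 : ∀ i j : Fin n, (∑ k, if i = k then Hm i j * Hm k j else 0) = Hm i j * Hm i j := by
        intro i j; simp [Finset.sum_ite_eq]
      rw [Finset.sum_congr rfl fun i _ => Finset.sum_congr rfl fun j _ => h2 i j, hSdef]
      exact Finset.sum_congr rfl fun i _ => Finset.sum_congr rfl fun j _ => (pow_two _).symm
    have hQ2 : ∑ i : Fin n, ∑ j : Fin n, ∑ k : Fin n, ∑ l : Fin n,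
        (if i = k then U j * U l * (Hm i j * Hm k l) else 0) = B := by
      have h1 : ∀ i j : Fin n, (∑ k, ∑ l, if i = k then U j * U l * (Hm i j * Hm k l) else 0)
          = ∑ l, U j * U l * (Hm i j * Hm i l) := by
        intro i j
        rw [Finset.sum_congr rfl fun k _ => pull_ite _ inferInstance _]
        simp [Finset.sum_ite_eq]
      rw [Finset.sum_congr rfl fun i _ => Finset.sum_congr rfl fun j _ => h1 i j]
      have h2 : ∀ i : Fin n, (∑ j, ∑ l, U j * U l * (Hm i j * Hm i l)) = b i * b i := by
        intro i
        have e : ∀ j l : Fin n, U j * U l * (Hm i j * Hm i l)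
            = (U j * Hm i j) * (U l * Hm i l) := fun j l => by ring
        rw [Finset.sum_congr rfl fun j _ => Finset.sum_congr rfl fun l _ => e j l,
          sum2_factor (fun j => U j * Hm i j) (fun l => U l * Hm i l), f1' i]
      rw [Finset.sum_congr rfl fun i _ => h2 i, hBdef]
      exact Finset.sum_congr rfl fun i _ => (pow_two _).symm
    have hQ3 : ∑ i : Fin n, ∑ j : Fin n, ∑ k : Fin n, ∑ l : Fin n,
        (if j = l then U i * U k * (Hm i j * Hm k l) else 0) = B := by
      have h1 : ∀ i j k : Fin n, (∑ l, if j = l then U i * U k * (Hm i j * Hm k l) else 0)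
          = U i * U k * (Hm i j * Hm k j) := by
        intro i j k; simp [Finset.sum_ite_eq]
      rw [Finset.sum_congr rfl fun i _ => Finset.sum_congr rfl fun j _ =>
        Finset.sum_congr rfl fun k _ => h1 i j k]
      have h2 : ∀ i j : Fin n, (∑ k, U i * U k * (Hm i j * Hm k j))
          = (U i * Hm i j) * b j := by
        intro i j
        have e : ∀ k, U i * U k * (Hm i j * Hm k j) = (U i * Hm i j) * (U k * Hm k j) :=
          fun k => by ring
        rw [Finset.sum_congr rfl fun k _ => e k, ← Finset.mul_sum, f1 j]
      rw [Finset.sum_congr rfl fun i _ => Finset.sum_congr rfl fun j _ => h2 i j,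
        Finset.sum_comm, hBdef]
      refine Finset.sum_congr rfl fun j _ => ?_
      rw [← Finset.sum_mul, f1 j, pow_two]
    have hQ4 : ∑ i : Fin n, ∑ j : Fin n, ∑ k : Fin n, ∑ l : Fin n,
        ((U i * (U j * Hm i j)) * (U k * (U l * Hm k l))) = c * c := by
      have h1 : ∀ i j : Fin n, (∑ k, ∑ l, (U i * (U j * Hm i j)) * (U k * (U l * Hm k l)))
          = (U i * (U j * Hm i j)) * c := by
        intro i j
        rw [Finset.sum_congr rfl fun k _ => (Finset.mul_sum _ _ _).symm, ← Finset.mul_sum]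
        congr 1
        rw [hcdef]
        refine Finset.sum_congr rfl fun k _ => ?_
        rw [← Finset.mul_sum, f1' k]
      rw [Finset.sum_congr rfl fun i _ => Finset.sum_congr rfl fun j _ => h1 i j]
      have h2 : ∀ i : Fin n, (∑ j, U i * (U j * Hm i j) * c) = (U i * b i) * c := by
        intro i
        rw [← Finset.sum_mul, ← Finset.mul_sum, f1' i]
      rw [Finset.sum_congr rfl fun i _ => h2 i, ← Finset.sum_mul, ← hcdef]
    rw [hQ1, hQ2, hQ3, hQ4]
    ring
  -- nonnegativity of the |A|^2 sum, via sum of squares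
  have hQnn : 0 ≤ S - 2 * B / v + c ^ 2 / v ^ 2 := by
    rcases eq_or_ne p 0 with hp | hp
    · have hU : ∀ i, U i = 0 := by
        intro i
        have h0 : ∑ i, U i ^ 2 = 0 := by rw [← hpdef, hp]
        have h1 := (Finset.sum_eq_zero_iff_of_nonneg (fun i _ => sq_nonneg (U i))).1 h0 i
          (Finset.mem_univ i)
        exact pow_eq_zero_iff (n := 2) (by norm_num) |>.1 h1
      have hbz : ∀ j, b j = 0 := by intro j; rw [hb]; simp [hU]
      have hBz : B = 0 := by rw [hBdef]; simp [hbz]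
      have hcz : c = 0 := by rw [hcdef]; simp [hU]
      rw [hBz, hcz]
      have hS : 0 ≤ S := Finset.sum_nonneg fun i _ =>
        Finset.sum_nonneg fun j _ => sq_nonneg _
      simpa using hS
    · have hppos : 0 < p := lt_of_le_of_ne hp0 (Ne.symm hp)
      set α := (1 - s⁻¹) / p with hα
      have hp' : p = s ^ 2 - 1 := by rw [hs2, hv]; ring
      have hval : 2 * α - α ^ 2 * p = 1 / v := by
        rw [hα, ← hs2, hp']
        have hq : s ^ 2 - 1 ≠ 0 := by rw [← hp']; exact hp
        field_simp
        ring
      have m2 : ∑ i : Fin n, ∑ j : Fin n, ((U i * b j) * (U i * b j)) = p * B := by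
        have e : ∀ i j : Fin n, (U i * b j) * (U i * b j) = U i ^ 2 * b j ^ 2 :=
          fun i j => by ring
        rw [Finset.sum_congr rfl fun i _ => Finset.sum_congr rfl fun j _ => e i j,
          sum2_factor (fun i => U i ^ 2) (fun j => b j ^ 2), ← hpdef, ← hBdef]
      have m3 : ∑ i : Fin n, ∑ j : Fin n, ((b i * U j) * (b i * U j)) = B * p := by
        have e : ∀ i j : Fin n, (b i * U j) * (b i * U j) = b i ^ 2 * U j ^ 2 :=
          fun i j => by ring
        rw [Finset.sum_congr rfl fun i _ => Finset.sum_congr rfl fun j _ => e i j,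
          sum2_factor (fun i => b i ^ 2) (fun j => U j ^ 2), ← hpdef, ← hBdef]
      have m4 : ∑ i : Fin n, ∑ j : Fin n, ((U i * U j) * (U i * U j)) = p * p := by
        have e : ∀ i j : Fin n, (U i * U j) * (U i * U j) = U i ^ 2 * U j ^ 2 :=
          fun i j => by ring
        rw [Finset.sum_congr rfl fun i _ => Finset.sum_congr rfl fun j _ => e i j,
          sum2_factor (fun i => U i ^ 2) (fun j => U j ^ 2), ← hpdef]
      have m5 : ∑ i : Fin n, ∑ j : Fin n, (Hm i j * (U i * b j)) = B := by
        rw [Finset.sum_comm]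
        have e : ∀ j : Fin n, (∑ i, Hm i j * (U i * b j)) = b j * b j := by
          intro j
          have e' : ∀ i, Hm i j * (U i * b j) = (U i * Hm i j) * b j := fun i => by ring
          rw [Finset.sum_congr rfl fun i _ => e' i, ← Finset.sum_mul, f1 j]
        rw [Finset.sum_congr rfl fun j _ => e j, hBdef]
        exact Finset.sum_congr rfl fun j _ => (pow_two _).symm
      have m6 : ∑ i : Fin n, ∑ j : Fin n, (Hm i j * (b i * U j)) = B := by
        have e : ∀ i : Fin n, (∑ j, Hm i j * (b i * U j)) = b i * b i := by
          intro i
          have e' : ∀ j, Hm i j * (b i * U j) = b i * (U j * Hm i j) := fun j => by ring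
          rw [Finset.sum_congr rfl fun j _ => e' j, ← Finset.mul_sum, f1' i]
        rw [Finset.sum_congr rfl fun i _ => e i, hBdef]
        exact Finset.sum_congr rfl fun i _ => (pow_two _).symm
      have m7 : ∑ i : Fin n, ∑ j : Fin n, (Hm i j * (U i * U j)) = c := by
        have e : ∀ i : Fin n, (∑ j, Hm i j * (U i * U j)) = U i * b i := by
          intro i
          have e' : ∀ j, Hm i j * (U i * U j) = U i * (U j * Hm i j) := fun j => by ring
          rw [Finset.sum_congr rfl fun j _ => e' j, ← Finset.mul_sum, f1' i]
        rw [Finset.sum_congr rfl fun i _ => e i, hcdef]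
      have m8 : ∑ i : Fin n, ∑ j : Fin n, ((U i * b j) * (b i * U j)) = c * c := by
        have e : ∀ i j : Fin n, (U i * b j) * (b i * U j) = (U i * b i) * (U j * b j) :=
          fun i j => by ring
        rw [Finset.sum_congr rfl fun i _ => Finset.sum_congr rfl fun j _ => e i j,
          sum2_factor (fun i => U i * b i) (fun j => U j * b j), ← hcdef]
      have m9 : ∑ i : Fin n, ∑ j : Fin n, ((U i * b j) * (U i * U j)) = p * c := by
        have e : ∀ i j : Fin n, (U i * b j) * (U i * U j) = U i ^ 2 * (U j * b j) :=
          fun i j => by ring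
        rw [Finset.sum_congr rfl fun i _ => Finset.sum_congr rfl fun j _ => e i j,
          sum2_factor (fun i => U i ^ 2) (fun j => U j * b j), ← hpdef, ← hcdef]
      have m10 : ∑ i : Fin n, ∑ j : Fin n, ((b i * U j) * (U i * U j)) = c * p := by
        have e : ∀ i j : Fin n, (b i * U j) * (U i * U j) = (U i * b i) * U j ^ 2 :=
          fun i j => by ring
        rw [Finset.sum_congr rfl fun i _ => Finset.sum_congr rfl fun j _ => e i j,
          sum2_factor (fun i => U i * b i) (fun j => U j ^ 2), ← hpdef, ← hcdef]
      have hexp : ∀ i j : Fin n,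
          (Hm i j - α * (U i * b j) - α * (b i * U j) + α ^ 2 * c * (U i * U j)) ^ 2
          = Hm i j ^ 2 + α ^ 2 * ((U i * b j) * (U i * b j))
            + α ^ 2 * ((b i * U j) * (b i * U j))
            + (α ^ 2 * c) ^ 2 * ((U i * U j) * (U i * U j))
            - 2 * α * (Hm i j * (U i * b j)) - 2 * α * (Hm i j * (b i * U j))
            + 2 * (α ^ 2 * c) * (Hm i j * (U i * U j))
            + 2 * (α * α) * ((U i * b j) * (b i * U j))
            - 2 * (α * (α ^ 2 * c)) * ((U i * b j) * (U i * U j))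
            - 2 * (α * (α ^ 2 * c)) * ((b i * U j) * (U i * U j)) := by
        intro i j; ring
      have hSOS : S - 2 * B / v + c ^ 2 / v ^ 2
          = ∑ i, ∑ j, (Hm i j - α * (U i * b j) - α * (b i * U j)
              + α ^ 2 * c * (U i * U j)) ^ 2 := by
        rw [Finset.sum_congr rfl fun i _ => Finset.sum_congr rfl fun j _ => hexp i j]
        simp only [Finset.sum_add_distrib, Finset.sum_sub_distrib, ← Finset.mul_sum]
        rw [← hSdef, m2, m3, m4, m5, m6, m7, m8, m9, m10]
        have hrw : S - 2 * B / v + c ^ 2 / v ^ 2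
            = S - 2 * B * (1 / v) + c ^ 2 * (1 / v) ^ 2 := by ring
        rw [hrw, ← hval]
        ring
      rw [hSOS]
      exact Finset.sum_nonneg fun i _ => Finset.sum_nonneg fun j _ => sq_nonneg _
  -- final assembly
  constructor
  · have hW : ∀ i j : Fin n,
        ((if i = j then 1 else 0) - U i * U j / v) *
          (-(∑ k, (Hm i k * Hm j k + U k * Tm i j k)) / (v * s)
            + 3 * b i * b j / (v ^ 2 * s))
        = (-(1 / (v * s))) * (((if i = j then 1 else 0) - U i * U j / v) * (∑ k, Hm i k * Hm j k))
          + (-(1 / (v * s))) * (((if i = j then 1 else 0) - U i * U j / v) * (∑ k, U k * Tm i j k))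
          + (3 / (v ^ 2 * s)) * (((if i = j then 1 else 0) - U i * U j / v) * (b i * b j)) := by
      intro i j
      rw [Finset.sum_add_distrib]
      ring
    rw [Finset.sum_congr rfl fun i _ => Finset.sum_congr rfl fun j _ => hW i j]
    simp only [Finset.sum_add_distrib, ← Finset.mul_sum]
    rw [hGM1, hGM2, hGbb, hQ]
    have hD2 : ∑ i, xc i * (-b i / (v * s)) = (-(1 / (v * s))) * D := by
      have e : ∀ i, xc i * (-b i / (v * s)) = (-(1 / (v * s))) * (xc i * b i) :=
        fun i => by ring
      rw [Finset.sum_congr rfl fun i _ => e i, ← Finset.mul_sum, ← hDdef]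
    rw [hD2]
    field_simp
    ring
  · rw [hQ]
    exact hQnn

section mainproof
open Finset
variable {n : ℕ}

noncomputable def vv (f : EuclideanSpace ℝ (Fin n) → ℝ) (y : EuclideanSpace ℝ (Fin n)) : ℝ :=
  1 + ∑ k, (pd f k y) ^ 2

noncomputable def bb (f : EuclideanSpace ℝ (Fin n) → ℝ) (j : Fin n)
    (y : EuclideanSpace ℝ (Fin n)) : ℝ :=
  ∑ k, pd f k y * pd2 f j k y

set_option maxHeartbeats 2000000 in
/-- On a graphical self-shrinker, the vertical component `w = (1 + |∇f|²)^{−1/2}` of the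
upward unit normal satisfies `g^{ij} ∂²_{ij} w − (1/2) x·∇w = −|A|² w ≤ 0`. -/
theorem graphical_self_shrinker_normal_angle_equation
    (n : ℕ) (hn : 1 ≤ n) (Ω : Set (EuclideanSpace ℝ (Fin n))) (hΩ : IsOpen Ω)
    (f : EuclideanSpace ℝ (Fin n) → ℝ) (hf : ContDiffOn ℝ (⊤ : ℕ∞) f Ω)
    (heq : ∀ x ∈ Ω, ∑ i, ∑ j, gInv f i j x * pd2 f i j x
      = (1 / 2) * ((∑ i, x i * pd f i x) - f x))
    (w : EuclideanSpace ℝ (Fin n) → ℝ)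
    (hw : ∀ y, w y = (Real.sqrt (1 + ∑ i, (pd f i y) ^ 2))⁻¹) :
    ∀ x ∈ Ω,
      (∑ i, ∑ j, gInv f i j x * pd2 w i j x) - (1 / 2) * ∑ i, x i * pd w i x
          = -(sffNormSq f x) * w x
      ∧ (∑ i, ∑ j, gInv f i j x * pd2 w i j x) - (1 / 2) * ∑ i, x i * pd w i x ≤ 0 := by
  intro x hx
  -- smoothness
  have hsf : ∀ y ∈ Ω, ContDiffAt ℝ ∞ f y :=
    fun y hy => (hf.contDiffAt (hΩ.mem_nhds hy)).of_le (by simp)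
  have hsu : ∀ y ∈ Ω, ∀ k, ContDiffAt ℝ ∞ (pd f k) y :=
    fun y hy k => contDiffAt_pd (hsf y hy) k
  have hsH : ∀ y ∈ Ω, ∀ j k, ContDiffAt ℝ ∞ (pd2 f j k) y :=
    fun y hy j k => contDiffAt_pd (hsu y hy k) j
  have hdu : ∀ y ∈ Ω, ∀ k, DifferentiableAt ℝ (pd f k) y :=
    fun y hy k => diffAt_of_smooth (hsu y hy k)
  have hdH : ∀ y ∈ Ω, ∀ j k, DifferentiableAt ℝ (pd2 f j k) y :=
    fun y hy j k => diffAt_of_smooth (hsH y hy j k)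
  -- positivity of v
  have hvpos : ∀ y, 0 < vv f y := by
    intro y
    have : (0:ℝ) ≤ ∑ k, (pd f k y) ^ 2 := Finset.sum_nonneg fun k _ => sq_nonneg _
    have h : vv f y = 1 + ∑ k, (pd f k y) ^ 2 := rfl
    rw [h]; linarith
  have hv0 : ∀ y, vv f y ≠ 0 := fun y => ne_of_gt (hvpos y)
  have hspos : ∀ y, 0 < Real.sqrt (vv f y) := fun y => Real.sqrt_pos.2 (hvpos y)
  have hsq : ∀ y, Real.sqrt (vv f y) ^ 2 = vv f y := fun y => Real.sq_sqrt (hvpos y).le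
  -- differentiability of v, b
  have hdv : ∀ y ∈ Ω, DifferentiableAt ℝ (vv f) y := by
    intro y hy
    have : DifferentiableAt ℝ (fun z => 1 + ∑ k, (pd f k z) ^ 2) y := by
      apply (differentiableAt_const (1:ℝ)).add
      exact DifferentiableAt.fun_sum fun k _ => (hdu y hy k).fun_pow 2
    exact this
  have hdb : ∀ y ∈ Ω, ∀ j, DifferentiableAt ℝ (bb f j) y := by
    intro y hy j
    have : DifferentiableAt ℝ (fun z => ∑ k, pd f k z * pd2 f j k z) y :=
      DifferentiableAt.fun_sum fun k _ => (hdu y hy k).fun_mul (hdH y hy j k)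
    exact this
  have hdsqrtv : ∀ y ∈ Ω, DifferentiableAt ℝ (fun z => Real.sqrt (vv f z)) y := by
    intro y hy
    exact ((Real.hasDerivAt_sqrt (hv0 y)).comp_hasFDerivAt y
      (hdv y hy).hasFDerivAt).differentiableAt
  -- derivative of v
  have hpdv : ∀ y ∈ Ω, ∀ j, pd (vv f) j y = 2 * bb f j y := by
    intro y hy j
    have h1 : pd (vv f) j y = pd (fun z => (1:ℝ) + ∑ k, (pd f k z) ^ 2) j y := rfl
    rw [h1, pd_add (differentiableAt_const (1:ℝ))
      (DifferentiableAt.fun_sum fun k _ => (hdu y hy k).fun_pow 2), pd_const,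
      pd_sum Finset.univ (fun k z => (pd f k z) ^ 2) (fun k _ => (hdu y hy k).pow 2)]
    have h2 : ∀ k, pd (fun z => (pd f k z) ^ 2) j y = 2 * (pd f k y * pd2 f j k y) := by
      intro k
      rw [pd_sq (hdu y hy k)]
      have : pd (fun z => pd f k z) j y = pd2 f j k y := rfl
      rw [this]; ring
    rw [Finset.sum_congr rfl fun k _ => h2 k, ← Finset.mul_sum]
    have h3 : bb f j y = ∑ k, pd f k y * pd2 f j k y := rfl
    rw [h3]; ring
  -- derivative of w
  have hweq : w = fun y => (Real.sqrt (vv f y))⁻¹ := funext hw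
  have hpdw : ∀ y ∈ Ω, ∀ j, pd w j y
      = -bb f j y / (vv f y * Real.sqrt (vv f y)) := by
    intro y hy j
    rw [hweq, pd_inv (hdsqrtv y hy) (ne_of_gt (hspos y)),
      pd_sqrt (hdv y hy) (hv0 y), hpdv y hy j, hsq y]
    field_simp
-- Schwarz symmetry
  have hHsym : ∀ y ∈ Ω, ∀ i j, pd2 f i j y = pd2 f j i y :=
    fun y hy i j => pd2_comm (hsf y hy) i j
  have hT1 : ∀ i j k : Fin n, pd (pd2 f j k) i x = pd (pd2 f i k) j x :=
    fun i j k => pd2_comm (hsu x hx k) i j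
  have hT2 : ∀ i j k : Fin n, pd (pd2 f j k) i x = pd (pd2 f k j) i x := by
    intro i j k
    apply pd_congr
    filter_upwards [hΩ.mem_nhds hx] with y hy
    exact hHsym y hy j k
  -- derivative of b at x
  have hpdb : ∀ i j : Fin n, pd (bb f j) i x
      = ∑ k, (pd2 f i k x * pd2 f j k x + pd f k x * pd (pd2 f j k) i x) := by
    intro i j
    have h1 : pd (bb f j) i x = pd (fun z => ∑ k, pd f k z * pd2 f j k z) i x := rfl
    rw [h1, pd_sum Finset.univ (fun k z => pd f k z * pd2 f j k z)
      (fun k _ => (hdu x hx k).mul (hdH x hx j k))]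
    refine Finset.sum_congr rfl fun k _ => ?_
    rw [pd_mul (hdu x hx k) (hdH x hx j k)]
    rfl
  -- second derivative of w at x
  have hW : ∀ i j : Fin n, pd2 w i j x
      = -(∑ k, (pd2 f i k x * pd2 f j k x + pd f k x * pd (pd2 f j k) i x))
          / (vv f x * Real.sqrt (vv f x))
        + 3 * bb f i x * bb f j x / ((vv f x) ^ 2 * Real.sqrt (vv f x)) := by
    intro i j
    have h0 : pd2 w i j x
        = pd (fun y => -bb f j y / (vv f y * Real.sqrt (vv f y))) i x := by
      apply pd_congr
      filter_upwards [hΩ.mem_nhds hx] with y hy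
      exact hpdw y hy j
    rw [h0]
    have hdd : DifferentiableAt ℝ (fun y => vv f y * Real.sqrt (vv f y)) x :=
      (hdv x hx).mul (hdsqrtv x hx)
    have hdd0 : vv f x * Real.sqrt (vv f x) ≠ 0 :=
      mul_ne_zero (hv0 x) (ne_of_gt (hspos x))
    rw [pd_div (hdb x hx j).fun_neg hdd hdd0, pd_neg,
      pd_mul (hdv x hx) (hdsqrtv x hx), pd_sqrt (hdv x hx) (hv0 x),
      hpdv x hx i, hpdb i j]
    have hs2 := hsq x
    set s := Real.sqrt (vv f x) with hsdef
    have hvs : vv f x = s ^ 2 := hs2.symm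
    rw [hvs]
    have hsne : s ≠ 0 := ne_of_gt (hspos x)
    field_simp
    ring
  -- derivative of the inverse metric at x
  have hpg : ∀ k i j : Fin n, pd (gInv f i j) k x
      = -(((pd2 f k i x * pd f j x + pd f i x * pd2 f k j x) * vv f x
            - pd f i x * pd f j x * (2 * bb f k x)) / (vv f x) ^ 2) := by
    intro k i j
    have h1 : pd (gInv f i j) k x
        = pd (fun y => (if i = j then (1:ℝ) else 0) - pd f i y * pd f j y / vv f y) k x := rfl
    have hq : DifferentiableAt ℝ (fun y => pd f i y * pd f j y / vv f y) x := by
      simp only [div_eq_mul_inv]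
      exact ((hdu x hx i).mul (hdu x hx j)).mul ((hdv x hx).inv (hv0 x))
    rw [h1, pd_sub (differentiableAt_const _) hq, pd_const,
      pd_div ((hdu x hx i).fun_mul (hdu x hx j)) (hdv x hx) (hv0 x),
      pd_mul (hdu x hx i) (hdu x hx j), hpdv x hx k]
    have e1 : pd (fun y => pd f i y) k x = pd2 f k i x := rfl
    have e2 : pd (fun y => pd f j y) k x = pd2 f k j x := rfl
    rw [e1, e2]
    ring
  -- differentiated shrinker equation at x
  have hdg : ∀ i j : Fin n, DifferentiableAt ℝ (gInv f i j) x := by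
    intro i j
    have hq : DifferentiableAt ℝ (fun y => pd f i y * pd f j y / vv f y) x := by
      simp only [div_eq_mul_inv]
      exact ((hdu x hx i).mul (hdu x hx j)).mul ((hdv x hx).inv (hv0 x))
    exact (differentiableAt_const _).sub hq
  have hdeq : ∀ k : Fin n,
      ∑ i, ∑ j, (pd (gInv f i j) k x * pd2 f i j x + gInv f i j x * pd (pd2 f i j) k x)
      = 1 / 2 * ∑ i, x i * pd2 f k i x := by
    intro k
    have hL : pd (fun y => ∑ i, ∑ j, gInv f i j y * pd2 f i j y) k x
        = pd (fun y => (1:ℝ) / 2 * ((∑ i, y i * pd f i y) - f y)) k x := by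
      apply pd_congr
      filter_upwards [hΩ.mem_nhds hx] with y hy
      exact heq y hy
    -- compute LHS
    have hLc : pd (fun y => ∑ i, ∑ j, gInv f i j y * pd2 f i j y) k x
        = ∑ i, ∑ j, (pd (gInv f i j) k x * pd2 f i j x + gInv f i j x * pd (pd2 f i j) k x) := by
      rw [pd_sum Finset.univ (fun i y => ∑ j, gInv f i j y * pd2 f i j y)
        (fun i _ => DifferentiableAt.fun_sum fun j _ => (hdg i j).fun_mul (hdH x hx i j))]
      refine Finset.sum_congr rfl fun i _ => ?_
      rw [pd_sum Finset.univ (fun j y => gInv f i j y * pd2 f i j y)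
        (fun j _ => (hdg i j).mul (hdH x hx i j))]
      refine Finset.sum_congr rfl fun j _ => ?_
      rw [pd_mul (hdg i j) (hdH x hx i j)]
    -- compute RHS
    have hdcoord : ∀ i : Fin n, DifferentiableAt ℝ
        (fun y : EuclideanSpace ℝ (Fin n) => y i) x :=
      fun i => (EuclideanSpace.proj i : EuclideanSpace ℝ (Fin n) →L[ℝ] ℝ).differentiableAt
    have hdsum2 : DifferentiableAt ℝ
        (fun y : EuclideanSpace ℝ (Fin n) => ∑ i, y i * pd f i y) x :=
      DifferentiableAt.fun_sum fun i _ => (hdcoord i).fun_mul (hdu x hx i)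
    have hRc : pd (fun y => (1:ℝ) / 2 * ((∑ i, y i * pd f i y) - f y)) k x
        = 1 / 2 * ∑ i, x i * pd2 f k i x := by
      rw [pd_const_mul (hdsum2.fun_sub (diffAt_of_smooth (hsf x hx))),
        pd_sub hdsum2 (diffAt_of_smooth (hsf x hx)),
        pd_sum Finset.univ (fun i y => y i * pd f i y)
          (fun i _ => (hdcoord i).mul (hdu x hx i))]
      have e : ∀ i : Fin n, pd (fun y => y i * pd f i y) k x
          = (if i = k then 1 else 0) * pd f i x + x i * pd2 f k i x := by
        intro i
        rw [pd_mul (hdcoord i) (hdu x hx i), pd_coord]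
        rfl
      rw [Finset.sum_congr rfl fun i _ => e i, Finset.sum_add_distrib]
      have e2 : ∑ i, (if i = k then (1:ℝ) else 0) * pd f i x = pd f k x := by
        have e3 : ∀ i : Fin n, (if i = k then (1:ℝ) else 0) * pd f i x
            = if k = i then pd f i x else 0 := by
          intro i
          by_cases h : i = k
          · subst h; simp
          · simp [h, Ne.symm h]
        rw [Finset.sum_congr rfl fun i _ => e3 i, Finset.sum_ite_eq]
        simp
      rw [e2]
      ring
    rw [hLc, hRc] at hL
    exact hL
  -- apply the algebraic lemma
  have hmain := key_algebra n (fun i => pd f i x) (fun j => bb f j x) (fun i => x i)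
    (fun i j => pd2 f i j x) (fun a b c => pd (pd2 f b c) a x)
    (vv f x) (Real.sqrt (vv f x)) rfl (hspos x) (hsq x) (fun j => rfl)
    (fun i j => hHsym x hx i j) hT1 hT2
    (by
      intro k
      have h := hdeq k
      rw [← h]
      refine Finset.sum_congr rfl fun i _ => Finset.sum_congr rfl fun j _ => ?_
      congr 1
      congr 1
      exact (hpg k i j).symm)
  obtain ⟨hmain1, hmain2⟩ := hmain
  -- convert the goal
  have hwx : w x = (Real.sqrt (vv f x))⁻¹ := hw x
  have hgoalL : (∑ i, ∑ j, gInv f i j x * pd2 w i j x) - (1 / 2) * ∑ i, x i * pd w i x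
      = -(((vv f x)⁻¹ * ∑ i, ∑ j, ∑ k, ∑ l,
            gInv f i k x * gInv f j l x * pd2 f i j x * pd2 f k l x)
          * (Real.sqrt (vv f x))⁻¹) := by
    have e1 : ∑ i, ∑ j, gInv f i j x * pd2 w i j x
        = ∑ i, ∑ j, ((if i = j then (1:ℝ) else 0) - pd f i x * pd f j x / vv f x) *
            (-(∑ k, (pd2 f i k x * pd2 f j k x + pd f k x * pd (pd2 f j k) i x))
                / (vv f x * Real.sqrt (vv f x))
              + 3 * bb f i x * bb f j x / ((vv f x) ^ 2 * Real.sqrt (vv f x))) := by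
      refine Finset.sum_congr rfl fun i _ => Finset.sum_congr rfl fun j _ => ?_
      rw [hW i j]
      rfl
    have e2 : ∑ i, x i * pd w i x
        = ∑ i, x i * (-bb f i x / (vv f x * Real.sqrt (vv f x))) :=
      Finset.sum_congr rfl fun i _ => by rw [hpdw x hx i]
    rw [e1, e2]
    exact hmain1
  have hsff : sffNormSq f x = (vv f x)⁻¹ * ∑ i, ∑ j, ∑ k, ∑ l,
      gInv f i k x * gInv f j l x * pd2 f i j x * pd2 f k l x := rfl
  constructor
  · rw [hgoalL, hwx, hsff]
    ring
  · rw [hgoalL]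
    have hQnn : 0 ≤ ∑ i, ∑ j, ∑ k, ∑ l,
        gInv f i k x * gInv f j l x * pd2 f i j x * pd2 f k l x := hmain2
    have h1 : 0 ≤ (vv f x)⁻¹ := inv_nonneg.2 (hvpos x).le
    have h2 : 0 ≤ (Real.sqrt (vv f x))⁻¹ := inv_nonneg.2 (hspos x).le
    have := mul_nonneg (mul_nonneg h1 hQnn) h2
    linarith
end mainproof
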